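/- Let G = (V,E) be a finite graph, p > 1 with dual exponent q (1/p + 1/q = 1), and A,B ⊆ V nonempty disjoint subsets such that Θ(A,B) ≠ ∅. Then Mod_p(Θ(A,B),G)^{1/p} · E_q(A,B,G)^{1/q} = 1, where E_q(A,B,G) is the minimal q-energy among unit flows from A to B. Moreover, if F is a unit flow from A to B and ρ is a Θ(A,B)-admissible density satisfying M_p(ρ)^{1/p} · E_q(F)^{1/q} = 1, then ρ is the optimal admissible density and F is the energy-minimizing unit flow. -/

import Mathlib

open Classical Real

noncomputable section

namespace Paper

variable {V : Type*} [Fintype V] [DecidableEq V]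

/-- A path in a graph `G`, packaged together with its endpoints. -/
def GPath (G : SimpleGraph V) : Type _ := Σ u v : V, G.Walk u v

/-- The `ρ`-length of a path: the sum of `ρ` over its edges. -/
def lenρ (G : SimpleGraph V) (ρ : Sym2 V → ℝ) (θ : GPath G) : ℝ :=
  (θ.2.2.edges.map ρ).sum

/-- A density on a graph: nonnegative and supported on the edge set. -/
def IsDensity (G : SimpleGraph V) (ρ : Sym2 V → ℝ) : Prop :=
  (∀ e, 0 ≤ ρ e) ∧ ∀ e, e ∉ G.edgeSet → ρ e = 0

/-- `ρ` is admissible for the path family `Θ`. -/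
def Admissible (G : SimpleGraph V) (Θ : Set (GPath G)) (ρ : Sym2 V → ℝ) : Prop :=
  (∀ e, 0 ≤ ρ e) ∧ ∀ θ ∈ Θ, 1 ≤ lenρ G ρ θ

/-- The `p`-mass of a density: `∑_{e ∈ E} ρ(e)^p`. -/
def massE (G : SimpleGraph V) (p : ℝ) (ρ : Sym2 V → ℝ) : ℝ :=
  ∑ e : Sym2 V, if e ∈ G.edgeSet then ρ e ^ p else 0

/-- The edge `p`-modulus of a family of paths. -/
def ModE (G : SimpleGraph V) (p : ℝ) (Θ : Set (GPath G)) : ℝ :=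
  sInf {m | ∃ ρ, Admissible G Θ ρ ∧ massE G p ρ = m}

/-- The optimal admissible density for a path family. -/
def IsOptDensityE (G : SimpleGraph V) (p : ℝ) (Θ : Set (GPath G)) (ρ : Sym2 V → ℝ) : Prop :=
  IsDensity G ρ ∧ Admissible G Θ ρ ∧
    ∀ σ, IsDensity G σ → Admissible G Θ σ → massE G p ρ ≤ massE G p σ

/-- The family `Θ(A,B)` of paths connecting `A` to `B`. -/
def pathsBetween (G : SimpleGraph V) (A B : Set V) : Set (GPath G) :=
  {θ | θ.1 ∈ A ∧ θ.2.1 ∈ B}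

/-- Vertex `p`-modulus of a family of vertex sets. -/
def ModV (p : ℝ) (Θh : Set (Finset V)) : ℝ :=
  sInf {m | ∃ ρ : V → ℝ, (∀ v, 0 ≤ ρ v) ∧ (∀ s ∈ Θh, 1 ≤ ∑ v ∈ s, ρ v) ∧
    (∑ v : V, ρ v ^ p) = m}

/-- Maximum degree of a graph. -/
def maxDeg (G : SimpleGraph V) : ℕ :=
  Finset.univ.sup fun v : V => Nat.card {u // G.Adj v u}

/-- `|U(x) − U(y)|` as a function on unordered pairs. -/
def ediff (U : V → ℝ) : Sym2 V → ℝ :=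
  Sym2.lift ⟨fun x y => |U x - U y|, fun x y => abs_sub_comm (U x) (U y)⟩

/-- The `p`-energy `∑_{{x,y}∈E} |U(x)−U(y)|^p` of a potential. -/
def capMass (G : SimpleGraph V) (p : ℝ) (U : V → ℝ) : ℝ :=
  ∑ e : Sym2 V, if e ∈ G.edgeSet then ediff U e ^ p else 0

/-- The `p`-capacity from `A` to `B`. -/
def CapE (G : SimpleGraph V) (p : ℝ) (A B : Finset V) : ℝ :=
  sInf {m | ∃ U : V → ℝ, (∀ a ∈ A, U a = 0) ∧ (∀ b ∈ B, U b = 1) ∧ capMass G p U = m}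

/-- `U` is `p`-harmonic in `A`. -/
def pHarmOn (G : SimpleGraph V) (p : ℝ) (U : V → ℝ) (A : Set V) : Prop :=
  ∀ x ∈ A, (∑ y : V,
    if G.Adj x y then Real.sign (U x - U y) * |U x - U y| ^ (p - 1) else 0) = 0

/-- The (outer) vertex boundary of `A`. -/
def vBoundary (G : SimpleGraph V) (A : Set V) : Set V :=
  {x | x ∉ A ∧ ∃ y ∈ A, G.Adj x y}

/-- A flow from `A` to `B`: antisymmetric, supported on edges, divergence free off `A ∪ B`. -/
def IsFlow (G : SimpleGraph V) (A B : Finset V) (F : V → V → ℝ) : Prop :=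
  (∀ x y, F x y = - F y x) ∧ (∀ x y, ¬ G.Adj x y → F x y = 0) ∧
  (∀ x, x ∉ A → x ∉ B → (∑ y : V, F x y) = 0)

/-- The total flow out of `A`. -/
def totalFlow (A : Finset V) (F : V → V → ℝ) : ℝ := ∑ x ∈ A, ∑ y : V, F x y

/-- `|F(e)|` as a function on unordered pairs. -/
def flowAbs (F : V → V → ℝ) : Sym2 V → ℝ :=
  Sym2.lift ⟨fun x y => |F x y| ⊔ |F y x|, fun x y => sup_comm _ _⟩

/-- The `q`-energy of a flow. -/
def energyQ (G : SimpleGraph V) (q : ℝ) (F : V → V → ℝ) : ℝ :=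
  ∑ e : Sym2 V, if e ∈ G.edgeSet then flowAbs F e ^ q else 0

/-- The minimal `q`-energy among unit flows from `A` to `B`. -/
def EminQ (G : SimpleGraph V) (q : ℝ) (A B : Finset V) : ℝ :=
  sInf {m | ∃ F, IsFlow G A B F ∧ totalFlow A F = 1 ∧ energyQ G q F = m}

end Paper

/-!
An admissible density `ρ` yields a potential `d`, the `ρ`-distance from `A` truncated at `1`,
with `|d y - d x| ≤ ρ {x, y}` on edges. Pairing a unit flow `F` with the increments of `d`
gives `1 ≤ ∑ ρ |F| ≤ M_p(ρ)^{1/p} E_q(F)^{1/q}` by Hölder, so the product is always at least `1`.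

It equals `1` for the following pair. Let `U` minimize the `p`-energy
`κ = ∑_{x ~ y} |U x - U y|^p` among potentials with `U = 0` on `A`, `U = 1` on `B`. The first
variation of the energy shows that the `p`-gradient flow `|∇U|^{p-2} ∇U` is divergence free
off `A ∪ B`, and summation by parts shows its total flow is `κ`. Hence `|∇U|` is admissible
with `p`-mass `κ`, while `κ⁻¹ |∇U|^{p-2} ∇U` is a unit flow with `q`-energy `κ^{1-q}`, using
`(p - 1) q = p`. So both infima are attained and their product is `1`. Finally, if a density
`ρ` and a unit flow `F` have product `1`, weak duality with `F` fixed gives `M_p(σ) ≥ M_p(ρ)`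
for every admissible `σ`, and symmetrically for `F`.
-/

namespace Paper

open Finset

theorem abs_rpow_sub_two_mul_abs {p : ℝ} (hp : p ≠ 1) (r : ℝ) :
    |r| ^ (p - 2) * |r| = |r| ^ (p - 1) := by
  rw [show p - 1 = p - 2 + 1 by ring, Real.rpow_add' (abs_nonneg r) (by contrapose! hp; linarith),
    Real.rpow_one]

theorem abs_rpow_sub_two_mul_self_mul_self {p : ℝ} (hp : p ≠ 0) (r : ℝ) :
    |r| ^ (p - 2) * r * r = |r| ^ p := by
  calc |r| ^ (p - 2) * r * r = |r| ^ (p - 2) * |r| ^ (2 : ℝ) := by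
        rw [mul_assoc, Real.rpow_two, sq_abs, sq]
    _ = |r| ^ p := by rw [← Real.rpow_add' (abs_nonneg r) (by simpa using hp), sub_add_cancel]

theorem hasDerivAt_abs_add_mul_rpow {p : ℝ} (hp : 1 < p) (c k : ℝ) :
    HasDerivAt (fun t => |c + t * k| ^ p) (p * |c| ^ (p - 2) * c * k) 0 := by
  have hinner : HasDerivAt (fun t : ℝ => c + t * k) k 0 := by
    simpa using ((hasDerivAt_id (0 : ℝ)).mul_const k).const_add c
  exact (hasDerivAt_abs_rpow c hp).comp_of_eq 0 hinner (by simp)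

theorem isLeast_of_one_le_rpow_mul_rpow {S : Set ℝ} {a b s t : ℝ} (ha : 0 < a)
    (hS : ∀ s' ∈ S, 0 ≤ s') (hs : s ∈ S) (hST : ∀ s' ∈ S, 1 ≤ s' ^ a * t ^ b)
    (h : s ^ a * t ^ b = 1) : IsLeast S s := by
  refine ⟨hs, fun s' hs' => ?_⟩
  have ht : 0 < t ^ b := by
    by_contra! ht
    linarith [mul_nonpos_of_nonneg_of_nonpos (Real.rpow_nonneg (hS s hs) a) ht]
  have : s ^ a ≤ s' ^ a := le_of_mul_le_mul_right (h ▸ hST s' hs') ht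
  exact (Real.rpow_le_rpow_iff (hS s hs) (hS s' hs') ha).1 this

section Flows

variable {V : Type*} {G : SimpleGraph V}

theorem flowAbs_nonneg (F : V → V → ℝ) (e : Sym2 V) : 0 ≤ flowAbs F e := by
  induction e with
  | _ x y => exact (abs_nonneg _).trans le_sup_left

theorem flowAbs_const_mul {c : ℝ} (hc : 0 ≤ c) (F : V → V → ℝ) (e : Sym2 V) :
    flowAbs (fun x y => c * F x y) e = c * flowAbs F e := by
  induction e with
  | _ x y =>
    change |c * F x y| ⊔ |c * F y x| = c * (|F x y| ⊔ |F y x|)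
    rw [abs_mul, abs_mul, abs_of_nonneg hc, mul_max_of_nonneg _ _ hc]

variable [Fintype V]

variable (G) in
theorem sum_adj_eq_two_mul_sum_edgeFinset (f : Sym2 V → ℝ) :
    ∑ x, ∑ y, (if G.Adj x y then f s(x, y) else 0) = 2 * ∑ e ∈ G.edgeFinset, f e := by
  have darts : ∑ x, ∑ y, (if G.Adj x y then f s(x, y) else 0) = ∑ d : G.Dart, f d.edge := by
    rw [← Fintype.sum_prod_type', ← sum_filter]
    exact sum_bij' (fun p h => ⟨p, (mem_filter.1 h).2⟩) (fun d _ => d.toProd)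
      (by simp) (by simp) (by simp) (by simp) (by simp)
  rw [darts, ← sum_fiberwise_of_maps_to (g := SimpleGraph.Dart.edge) (t := G.edgeFinset)
    (by simp), mul_sum]
  refine sum_congr rfl fun e he => ?_
  rw [sum_congr rfl fun d hd => by rw [(mem_filter.1 hd).2], sum_const,
    G.dart_edge_fiber_card e (G.mem_edgeFinset.1 he), nsmul_eq_mul, Nat.cast_ofNat]

variable (G) in
theorem sum_ite_mem_edgeSet (f : Sym2 V → ℝ) :
    (∑ e, if e ∈ G.edgeSet then f e else 0) = ∑ e ∈ G.edgeFinset, f e := by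
  rw [← sum_filter]
  congr 1
  ext e
  simp

theorem energyQ_nonneg {q : ℝ} (F : V → V → ℝ) : 0 ≤ energyQ G q F := by
  rw [energyQ, sum_ite_mem_edgeSet]
  exact sum_nonneg fun e _ => Real.rpow_nonneg (flowAbs_nonneg F e) q

theorem energyQ_const_mul {q c : ℝ} (hc : 0 ≤ c) (F : V → V → ℝ) :
    energyQ G q (fun x y => c * F x y) = c ^ q * energyQ G q F := by
  rw [energyQ, energyQ, mul_sum]
  refine sum_congr rfl fun e _ => ?_
  split_ifs
  · rw [flowAbs_const_mul hc, Real.mul_rpow hc (flowAbs_nonneg F e)]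
  · rw [mul_zero]

variable {A B : Finset V} {F : V → V → ℝ}

theorem sum_sum_mul_sub_eq_of_antisymm (hF : ∀ x y, F x y = -F y x) (d : V → ℝ) :
    ∑ x, ∑ y, F x y * (d y - d x) = -2 * ∑ x, d x * ∑ y, F x y := by
  have swap : ∑ x, ∑ y, F x y * d y = -∑ x, d x * ∑ y, F x y := by
    rw [sum_comm, ← sum_neg_distrib]
    refine sum_congr rfl fun y _ => ?_
    rw [mul_sum, ← sum_neg_distrib]
    exact sum_congr rfl fun x _ => by rw [hF x y]; ring
  have diag : ∑ x, ∑ y, F x y * d x = ∑ x, d x * ∑ y, F x y := by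
    simp only [mul_sum, mul_comm]
  simp only [mul_sub, sum_sub_distrib, swap, diag]
  ring

theorem IsFlow.sum_mul_sum_eq (hF : IsFlow G A B F) (hAB : Disjoint A B) (d : V → ℝ) :
    ∑ x, d x * ∑ y, F x y = ∑ x ∈ A, d x * ∑ y, F x y + ∑ x ∈ B, d x * ∑ y, F x y := by
  rw [← sum_union hAB]
  refine (sum_subset (subset_univ _) fun x _ hx => ?_).symm
  rw [mem_union, not_or] at hx
  rw [hF.2.2 x hx.1 hx.2, mul_zero]

theorem IsFlow.sum_sum_mul_sub_eq (hF : IsFlow G A B F) (hAB : Disjoint A B) {d : V → ℝ}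
    (hdA : ∀ a ∈ A, d a = 0) (hdB : ∀ b ∈ B, d b = 1) :
    ∑ x, ∑ y, F x y * (d y - d x) = 2 * totalFlow A F := by
  have conservation : ∑ x ∈ A, ∑ y, F x y + ∑ x ∈ B, ∑ y, F x y = 0 := by
    have total := sum_sum_mul_sub_eq_of_antisymm hF.1 fun _ => 1
    rw [hF.sum_mul_sum_eq hAB] at total
    simp only [sub_self, mul_zero, sum_const_zero, one_mul] at total
    linarith
  have onA : ∑ x ∈ A, d x * ∑ y, F x y = 0 :=
    sum_eq_zero fun x hx => by rw [hdA x hx, zero_mul]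
  have onB : ∑ x ∈ B, d x * ∑ y, F x y = ∑ x ∈ B, ∑ y, F x y :=
    sum_congr rfl fun x hx => by rw [hdB x hx, one_mul]
  rw [sum_sum_mul_sub_eq_of_antisymm hF.1, hF.sum_mul_sum_eq hAB, onA, onB, totalFlow]
  linarith

theorem IsFlow.const_mul (hF : IsFlow G A B F) (c : ℝ) : IsFlow G A B fun x y => c * F x y :=
  ⟨fun x y => by dsimp only; rw [hF.1 x y, mul_neg],
    fun x y h => by dsimp only; rw [hF.2.1 x y h, mul_zero],
    fun x hxA hxB => by rw [← mul_sum, hF.2.2 x hxA hxB, mul_zero]⟩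

theorem totalFlow_const_mul (c : ℝ) : totalFlow A (fun x y => c * F x y) = c * totalFlow A F := by
  simp only [totalFlow, mul_sum]

end Flows

section WeakDuality

variable {V : Type*} {G : SimpleGraph V}

theorem exists_potential_of_admissible {A B : Set V} {ρ : Sym2 V → ℝ}
    (hρ : Admissible G (pathsBetween G A B) ρ) :
    ∃ d : V → ℝ, (∀ a ∈ A, d a = 0) ∧ (∀ b ∈ B, d b = 1) ∧
      ∀ x y, G.Adj x y → |d y - d x| ≤ ρ s(x, y) := by
  let W : V → Set ℝ := fun x =>
    insert 1 {r | ∃ a ∈ A, ∃ w : G.Walk a x, (w.edges.map ρ).sum = r}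
  have W_nonneg : ∀ x, ∀ r ∈ W x, 0 ≤ r := by
    rintro x r (rfl | ⟨a, -, w, rfl⟩)
    · exact zero_le_one
    · exact List.sum_nonneg fun t ht => by
        obtain ⟨e, -, rfl⟩ := List.mem_map.1 ht
        exact hρ.1 e
  have W_bdd : ∀ x, BddBelow (W x) := fun x => ⟨0, W_nonneg x⟩
  have W_ne : ∀ x, (W x).Nonempty := fun x => ⟨1, Set.mem_insert _ _⟩
  refine ⟨fun x => sInf (W x), fun a ha => ?_, fun b hb => ?_, ?_⟩
  · exact le_antisymm (csInf_le (W_bdd a) (Or.inr ⟨a, ha, .nil, by simp⟩))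
      (le_csInf (W_ne a) (W_nonneg a))
  · refine le_antisymm (csInf_le (W_bdd b) (Set.mem_insert _ _)) (le_csInf (W_ne b) ?_)
    rintro r (rfl | ⟨a, ha, w, rfl⟩)
    · exact le_rfl
    · exact hρ.2 ⟨a, b, w⟩ ⟨ha, hb⟩
  have step : ∀ x y, G.Adj x y → sInf (W y) ≤ sInf (W x) + ρ s(x, y) := by
    intro x y hxy
    rw [← sub_le_iff_le_add]
    refine le_csInf (W_ne x) ?_
    rintro r (rfl | ⟨a, ha, w, rfl⟩)
    · linarith [csInf_le (W_bdd y) (Set.mem_insert _ _), hρ.1 s(x, y)]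
    · have hw : ((w.concat hxy).edges.map ρ).sum ∈ W y := Or.inr ⟨a, ha, _, rfl⟩
      have := csInf_le (W_bdd y) hw
      simp only [SimpleGraph.Walk.edges_concat, List.concat_eq_append, List.map_append,
        List.map_singleton, List.sum_append, List.sum_singleton] at this
      linarith
  intro x y hxy
  rw [abs_sub_le_iff]
  have := step y x hxy.symm
  rw [Sym2.eq_swap] at this
  exact ⟨by linarith [step x y hxy], by linarith⟩

variable [Fintype V] {A B : Finset V} {F : V → V → ℝ} {ρ : Sym2 V → ℝ} {p q : ℝ}

theorem massE_nonneg (hρ : ∀ e, 0 ≤ ρ e) : 0 ≤ massE G p ρ := by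
  rw [massE, sum_ite_mem_edgeSet]
  exact sum_nonneg fun e _ => Real.rpow_nonneg (hρ e) p

theorem totalFlow_le_sum_mul_flowAbs (hAB : Disjoint A B) (hF : IsFlow G A B F)
    (hρ : Admissible G (pathsBetween G A B) ρ) :
    totalFlow A F ≤ ∑ e ∈ G.edgeFinset, ρ e * flowAbs F e := by
  obtain ⟨d, hdA, hdB, hd⟩ := exists_potential_of_admissible hρ
  have termwise : ∀ x y,
      F x y * (d y - d x) ≤ if G.Adj x y then ρ s(x, y) * flowAbs F s(x, y) else 0 := by
    intro x y
    split_ifs with hxy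
    · calc F x y * (d y - d x) ≤ |F x y| * |d y - d x| := by
            rw [← abs_mul]; exact le_abs_self _
        _ ≤ flowAbs F s(x, y) * ρ s(x, y) :=
            mul_le_mul le_sup_left (hd x y hxy) (abs_nonneg _) (flowAbs_nonneg F _)
        _ = ρ s(x, y) * flowAbs F s(x, y) := mul_comm _ _
    · rw [hF.2.1 x y hxy, zero_mul]
  have pairing := hF.sum_sum_mul_sub_eq hAB hdA hdB
  have bound := sum_le_sum fun x (_ : x ∈ univ) => sum_le_sum fun y (_ : y ∈ univ) => termwise x y
  rw [pairing, sum_adj_eq_two_mul_sum_edgeFinset G fun e => ρ e * flowAbs F e] at bound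
  linarith

theorem one_le_massE_rpow_mul_energyQ_rpow (hpq : p.HolderConjugate q)
    (hAB : Disjoint A B) (hF : IsFlow G A B F) (hF1 : totalFlow A F = 1)
    (hρ : Admissible G (pathsBetween G A B) ρ) :
    1 ≤ massE G p ρ ^ (1 / p) * energyQ G q F ^ (1 / q) := by
  rw [massE, energyQ, sum_ite_mem_edgeSet, sum_ite_mem_edgeSet]
  calc 1 = totalFlow A F := hF1.symm
    _ ≤ ∑ e ∈ G.edgeFinset, ρ e * flowAbs F e := totalFlow_le_sum_mul_flowAbs hAB hF hρ
    _ ≤ _ := inner_le_Lp_mul_Lq_of_nonneg _ hpq (fun e _ => hρ.1 e) fun e _ => flowAbs_nonneg F e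

end WeakDuality

section Capacity

variable {V : Type*} {G : SimpleGraph V} {p : ℝ}

theorem ediff_nonneg (U : V → ℝ) (e : Sym2 V) : 0 ≤ ediff U e := by
  induction e with
  | _ x y => exact abs_nonneg _

theorem abs_sub_le_sum_ediff (U : V → ℝ) {u v : V} (w : G.Walk u v) :
    |U v - U u| ≤ (w.edges.map (ediff U)).sum := by
  induction w with
  | nil => simp
  | @cons a b c h w ih =>
    rw [SimpleGraph.Walk.edges_cons, List.map_cons, List.sum_cons]
    calc |U c - U a| ≤ |U c - U b| + |U b - U a| := abs_sub_le _ _ _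
      _ = ediff U s(a, b) + |U c - U b| := by rw [add_comm, abs_sub_comm]; rfl
      _ ≤ ediff U s(a, b) + (w.edges.map (ediff U)).sum := add_le_add le_rfl ih

def unitPotentials (A B : Finset V) : Set (V → ℝ) :=
  {U | (∀ a ∈ A, U a = 0) ∧ ∀ b ∈ B, U b = 1}

variable {A B : Finset V}

theorem isClosed_unitPotentials : IsClosed (unitPotentials A B) := by
  simp only [unitPotentials, Set.ofPred_and, Set.ofPred_forall]
  exact (isClosed_biInter fun a _ => isClosed_eq (continuous_apply a) continuous_const).inter
    (isClosed_biInter fun b _ => isClosed_eq (continuous_apply b) continuous_const)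

theorem admissible_ediff {U : V → ℝ} (hU : U ∈ unitPotentials A B) :
    Admissible G (pathsBetween G A B) (ediff U) := by
  refine ⟨ediff_nonneg U, ?_⟩
  rintro ⟨a, b, w⟩ ⟨ha, hb⟩
  have := abs_sub_le_sum_ediff U w
  rw [hU.1 a ha, hU.2 b hb, sub_zero, abs_one] at this
  exact this

variable [Fintype V]

theorem capMass_nonneg (U : V → ℝ) : 0 ≤ capMass G p U := by
  rw [capMass, sum_ite_mem_edgeSet]
  exact sum_nonneg fun e _ => Real.rpow_nonneg (ediff_nonneg U e) p

theorem two_mul_capMass (U : V → ℝ) :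
    2 * capMass G p U = ∑ x, ∑ y, if G.Adj x y then |U x - U y| ^ p else 0 := by
  rw [capMass, sum_ite_mem_edgeSet, ← sum_adj_eq_two_mul_sum_edgeFinset G fun e => ediff U e ^ p]
  rfl

theorem continuous_capMass (hp : 0 ≤ p) : Continuous (capMass G p) := by
  refine continuous_finsetSum _ fun e _ => ?_
  induction e with
  | _ a b =>
    split_ifs
    · exact ((continuous_apply a).sub (continuous_apply b)).abs.rpow_const fun _ => Or.inr hp
    · exact continuous_const

theorem capMass_comp_le (hp : 0 ≤ p) {f : ℝ → ℝ} (hf : ∀ s t, |f s - f t| ≤ |s - t|)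
    (U : V → ℝ) : capMass G p (f ∘ U) ≤ capMass G p U := by
  refine sum_le_sum fun e _ => ?_
  induction e with
  | _ a b =>
    split_ifs
    · exact Real.rpow_le_rpow (abs_nonneg _) (hf _ _) hp
    · exact le_rfl

theorem capMass_pos (hp : p ≠ 0) {U : V → ℝ} {u v : V} (w : G.Walk u v) (h : U u ≠ U v) :
    0 < capMass G p U := by
  refine (capMass_nonneg U).lt_of_ne' fun hzero => h ?_
  rw [capMass, sum_ite_mem_edgeSet,
    sum_eq_zero_iff_of_nonneg fun e _ => Real.rpow_nonneg (ediff_nonneg U e) p] at hzero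
  have flat : ∀ e ∈ w.edges, ediff U e = 0 := fun e he =>
    (Real.rpow_eq_zero (ediff_nonneg U e) hp).1
      (hzero e (G.mem_edgeFinset.2 (w.edges_subset_edgeSet he)))
  have := abs_sub_le_sum_ediff U w
  rw [List.sum_eq_zero fun r hr => by obtain ⟨e, he, rfl⟩ := List.mem_map.1 hr; exact flat e he,
    abs_nonpos_iff, sub_eq_zero] at this
  exact this.symm

theorem exists_isMinOn_capMass (hp : 0 ≤ p) (hAB : Disjoint A B) :
    ∃ U ∈ unitPotentials A B, IsMinOn (capMass G p) (unitPotentials A B) U := by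
  -- clamping to `[0, 1]` does not increase the energy, so we may minimize over a compact set
  let clamp : ℝ → ℝ := fun t => Set.projIcc (0 : ℝ) 1 zero_le_one t
  let K := unitPotentials A B ∩ Set.univ.pi fun _ => Set.Icc (0 : ℝ) 1
  have hK : IsCompact K := (isCompact_univ_pi fun _ => isCompact_Icc).inter_left
    isClosed_unitPotentials
  have clamp_mem : ∀ W ∈ unitPotentials A B, clamp ∘ W ∈ K := fun W hW =>
    ⟨⟨fun a ha => by simp [clamp, hW.1 a ha], fun b hb => by simp [clamp, hW.2 b hb]⟩,
      fun v _ => Subtype.prop _⟩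
  have indicator_mem : (fun v => if v ∈ B then 1 else 0) ∈ unitPotentials A B :=
    ⟨fun a ha => if_neg (disjoint_left.1 hAB ha), fun b hb => if_pos hb⟩
  obtain ⟨U, hUK, hUmin⟩ := hK.exists_isMinOn ⟨_, clamp_mem _ indicator_mem⟩
    (continuous_capMass hp).continuousOn
  exact ⟨U, hUK.1, fun W hW => (hUmin (clamp_mem W hW)).trans
    (capMass_comp_le hp (fun _ _ => Set.abs_projIcc_sub_projIcc _) W)⟩

end Capacity

section GradientFlow

def pGradFlow {V : Type*} (G : SimpleGraph V) (p : ℝ) (U : V → ℝ) (x y : V) : ℝ :=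
  if G.Adj x y then |U y - U x| ^ (p - 2) * (U y - U x) else 0

variable {V : Type*} {G : SimpleGraph V} {p : ℝ}

theorem pGradFlow_antisymm (U : V → ℝ) (x y : V) :
    pGradFlow G p U x y = -pGradFlow G p U y x := by
  unfold pGradFlow
  by_cases h : G.Adj x y
  · rw [if_pos h, if_pos h.symm, abs_sub_comm]
    ring
  · rw [if_neg h, if_neg fun h' => h h'.symm, neg_zero]

theorem pGradFlow_mul_sub (hp : p ≠ 0) (U : V → ℝ) (x y : V) :
    pGradFlow G p U x y * (U y - U x) = if G.Adj x y then |U x - U y| ^ p else 0 := by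
  unfold pGradFlow
  split_ifs
  · rw [abs_rpow_sub_two_mul_self_mul_self hp, abs_sub_comm]
  · rw [zero_mul]

theorem flowAbs_pGradFlow (hp : p ≠ 1) (U : V → ℝ) {x y : V} (h : G.Adj x y) :
    flowAbs (pGradFlow G p U) s(x, y) = ediff U s(x, y) ^ (p - 1) := by
  change |pGradFlow G p U x y| ⊔ |pGradFlow G p U y x| = |U x - U y| ^ (p - 1)
  rw [pGradFlow_antisymm U y x, abs_neg, sup_idem, pGradFlow, if_pos h, abs_mul,
    abs_of_nonneg (Real.rpow_nonneg (abs_nonneg _) _), abs_rpow_sub_two_mul_abs hp, abs_sub_comm]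

variable [Fintype V]

theorem sum_pGradFlow_mul_sub (hp : p ≠ 0) (U : V → ℝ) :
    ∑ x, ∑ y, pGradFlow G p U x y * (U y - U x) = 2 * capMass G p U := by
  simp only [pGradFlow_mul_sub hp, two_mul_capMass]

theorem energyQ_pGradFlow {q : ℝ} (hp : p ≠ 1) (hpq : (p - 1) * q = p) (U : V → ℝ) :
    energyQ G q (pGradFlow G p U) = capMass G p U := by
  refine sum_congr rfl fun e _ => ?_
  induction e with
  | _ x y =>
    split_ifs with h
    · rw [flowAbs_pGradFlow hp U h, ← Real.rpow_mul (ediff_nonneg U _), hpq]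
    · rfl

theorem hasDerivAt_two_mul_capMass_add_smul (hp : 1 < p) (U δ : V → ℝ) :
    HasDerivAt (fun t : ℝ => 2 * capMass G p (U + t • δ))
      (p * ∑ x, ∑ y, pGradFlow G p U x y * (δ y - δ x)) 0 := by
  simp only [two_mul_capMass, mul_sum]
  refine HasDerivAt.fun_sum fun x _ => HasDerivAt.fun_sum fun y _ => ?_
  unfold pGradFlow
  split_ifs
  · rw [show p * (|U y - U x| ^ (p - 2) * (U y - U x) * (δ y - δ x)) =
        p * |U x - U y| ^ (p - 2) * (U x - U y) * (δ x - δ y) by rw [abs_sub_comm]; ring]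
    refine (hasDerivAt_abs_add_mul_rpow hp (U x - U y) (δ x - δ y)).congr_of_eventuallyEq
      (Filter.Eventually.of_forall fun t => ?_)
    simp only [Pi.add_apply, Pi.smul_apply, smul_eq_mul]
    ring_nf
  · simp only [zero_mul, mul_zero]
    exact hasDerivAt_const _ _

variable {A B : Finset V} {U : V → ℝ}

theorem sum_pGradFlow_eq_zero_of_isMinOn (hp : 1 < p) (hU : U ∈ unitPotentials A B)
    (hmin : IsMinOn (capMass G p) (unitPotentials A B) U) {x : V} (hxA : x ∉ A) (hxB : x ∉ B) :
    ∑ y, pGradFlow G p U x y = 0 := by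
  let δ : V → ℝ := Pi.single x 1
  have perturbed : ∀ t : ℝ, U + t • δ ∈ unitPotentials A B := fun t =>
    ⟨fun a ha => by simp [δ, hU.1 a ha, ne_of_mem_of_not_mem ha hxA],
      fun b hb => by simp [δ, hU.2 b hb, ne_of_mem_of_not_mem hb hxB]⟩
  have hlocal : IsLocalMin (fun t : ℝ => 2 * capMass G p (U + t • δ)) 0 :=
    Filter.Eventually.of_forall fun t => by simpa using isMinOn_iff.1 hmin _ (perturbed t)
  have hderiv := hlocal.hasDerivAt_eq_zero (hasDerivAt_two_mul_capMass_add_smul hp U δ)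
  rw [sum_sum_mul_sub_eq_of_antisymm (pGradFlow_antisymm U)] at hderiv
  simpa [δ, Pi.single_apply, (by linarith : p ≠ 0)] using hderiv

theorem isFlow_pGradFlow (hp : 1 < p) (hU : U ∈ unitPotentials A B)
    (hmin : IsMinOn (capMass G p) (unitPotentials A B) U) : IsFlow G A B (pGradFlow G p U) :=
  ⟨pGradFlow_antisymm U, fun _ _ h => if_neg h,
    fun _ hxA hxB => sum_pGradFlow_eq_zero_of_isMinOn hp hU hmin hxA hxB⟩

theorem totalFlow_pGradFlow (hp : p ≠ 0) (hAB : Disjoint A B) (hU : U ∈ unitPotentials A B)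
    (hF : IsFlow G A B (pGradFlow G p U)) : totalFlow A (pGradFlow G p U) = capMass G p U := by
  have := hF.sum_sum_mul_sub_eq hAB hU.1 hU.2
  rw [sum_pGradFlow_mul_sub hp] at this
  linarith

end GradientFlow

section Attainment

variable {V : Type*} [Fintype V] {G : SimpleGraph V} {A B : Finset V} {p q : ℝ}

theorem exists_admissible_unitFlow_rpow_mul_rpow_eq_one (hpq : p.HolderConjugate q)
    (hAB : Disjoint A B) (hΘ : (pathsBetween G A B).Nonempty) :
    ∃ ρ F, Admissible G (pathsBetween G A B) ρ ∧ IsFlow G A B F ∧ totalFlow A F = 1 ∧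
      massE G p ρ ^ (1 / p) * energyQ G q F ^ (1 / q) = 1 := by
  obtain ⟨U, hU, hmin⟩ := exists_isMinOn_capMass (G := G) hpq.nonneg hAB
  obtain ⟨⟨a, b, w⟩, ha, hb⟩ := hΘ
  set κ := capMass G p U
  have hκ : 0 < κ := capMass_pos hpq.ne_zero w (by simp [hU.1 a ha, hU.2 b hb])
  have hF := isFlow_pGradFlow hpq.lt hU hmin
  refine ⟨ediff U, fun x y => κ⁻¹ * pGradFlow G p U x y, admissible_ediff hU,
    hF.const_mul κ⁻¹, ?_, ?_⟩
  · rw [totalFlow_const_mul, totalFlow_pGradFlow hpq.ne_zero hAB hU hF, inv_mul_cancel₀ hκ.ne']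
  · change κ ^ (1 / p) * _ = 1
    rw [energyQ_const_mul (inv_nonneg.2 hκ.le),
      energyQ_pGradFlow hpq.lt.ne' hpq.sub_one_mul_conj,
      Real.mul_rpow (Real.rpow_nonneg (inv_nonneg.2 hκ.le) _) hκ.le,
      ← Real.rpow_mul (inv_nonneg.2 hκ.le), mul_one_div_cancel hpq.symm.ne_zero, Real.rpow_one,
      mul_left_comm, ← Real.rpow_add hκ, hpq.one_div_add_one_div, div_one, Real.rpow_one,
      inv_mul_cancel₀ hκ.ne']

theorem modE_eq_massE_and_eminQ_eq_energyQ (hpq : p.HolderConjugate q) (hAB : Disjoint A B)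
    {F : V → V → ℝ} {ρ : Sym2 V → ℝ} (hF : IsFlow G A B F) (hF1 : totalFlow A F = 1)
    (hρ : Admissible G (pathsBetween G A B) ρ)
    (h : massE G p ρ ^ (1 / p) * energyQ G q F ^ (1 / q) = 1) :
    ModE G p (pathsBetween G A B) = massE G p ρ ∧ EminQ G q A B = energyQ G q F := by
  constructor
  · refine IsLeast.csInf_eq (isLeast_of_one_le_rpow_mul_rpow hpq.one_div_pos ?_ ⟨ρ, hρ, rfl⟩ ?_ h)
    · rintro _ ⟨σ, hσ, rfl⟩
      exact massE_nonneg hσ.1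
    · rintro _ ⟨σ, hσ, rfl⟩
      exact one_le_massE_rpow_mul_energyQ_rpow hpq hAB hF hF1 hσ
  · refine IsLeast.csInf_eq (isLeast_of_one_le_rpow_mul_rpow hpq.symm.one_div_pos ?_
      ⟨F, hF, hF1, rfl⟩ ?_ (by rwa [mul_comm]))
    · rintro _ ⟨F', -, -, rfl⟩
      exact energyQ_nonneg F'
    · rintro _ ⟨F', hF', hF'1, rfl⟩
      rw [mul_comm]
      exact one_le_massE_rpow_mul_energyQ_rpow hpq hAB hF' hF'1 hρ

end Attainment

end Paper

open Paper in
theorem statement4_general {V : Type*} [Fintype V] (G : SimpleGraph V)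
    (p q : ℝ) (hp : 1 < p) (hpq : 1 / p + 1 / q = 1) (A B : Finset V)
    (hAB : Disjoint A B)
    (hΘ : (pathsBetween G (↑A : Set V) (↑B : Set V)).Nonempty) :
    ModE G p (pathsBetween G (↑A : Set V) (↑B : Set V)) ^ (1 / p) *
        EminQ G q A B ^ (1 / q) = 1 ∧
      ∀ (F : V → V → ℝ) (ρ : Sym2 V → ℝ),
        IsFlow G A B F → totalFlow A F = 1 →
        Admissible G (pathsBetween G (↑A : Set V) (↑B : Set V)) ρ →
        massE G p ρ ^ (1 / p) * energyQ G q F ^ (1 / q) = 1 →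
        ModE G p (pathsBetween G (↑A : Set V) (↑B : Set V)) = massE G p ρ ∧
          EminQ G q A B = energyQ G q F := by
  have hconj : p.HolderConjugate q :=
    Real.holderConjugate_iff.2 ⟨hp, by simpa only [one_div] using hpq⟩
  obtain ⟨ρ, F, hρ, hF, hF1, h⟩ := exists_admissible_unitFlow_rpow_mul_rpow_eq_one hconj hAB hΘ
  obtain ⟨hMod, hE⟩ := modE_eq_massE_and_eminQ_eq_energyQ hconj hAB hF hF1 hρ h
  exact ⟨by rw [hMod, hE, h], fun F ρ hF hF1 hρ h =>
    modE_eq_massE_and_eminQ_eq_energyQ hconj hAB hF hF1 hρ h⟩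

open Paper in
/-- Duality of modulus and flows:
`Mod_p(Θ(A,B),G)^{1/p} · E_q(A,B,G)^{1/q} = 1`; moreover any admissible density and
unit flow satisfying the equality case are optimal. -/
theorem statement4 {V : Type*} [Fintype V] [DecidableEq V] (G : SimpleGraph V)
    (p q : ℝ) (hp : 1 < p) (hpq : 1 / p + 1 / q = 1) (A B : Finset V)
    (hA : A.Nonempty) (hB : B.Nonempty) (hAB : Disjoint A B)
    (hΘ : (pathsBetween G (↑A : Set V) (↑B : Set V)).Nonempty) :
    ModE G p (pathsBetween G (↑A : Set V) (↑B : Set V)) ^ (1 / p) *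
        EminQ G q A B ^ (1 / q) = 1 ∧
      ∀ (F : V → V → ℝ) (ρ : Sym2 V → ℝ),
        IsFlow G A B F → totalFlow A F = 1 →
        Admissible G (pathsBetween G (↑A : Set V) (↑B : Set V)) ρ →
        massE G p ρ ^ (1 / p) * energyQ G q F ^ (1 / q) = 1 →
        ModE G p (pathsBetween G (↑A : Set V) (↑B : Set V)) = massE G p ρ ∧
          EminQ G q A B = energyQ G q F :=
  statement4_general G p q hp hpq A B hAB hΘ
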